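/- arXiv:2012.01402 — 6 statements merged into one kernel-verified Lean document; each statement's English description precedes it below -/
import Mathlib

section
/- If a pair of words (u, v) is sealed by some non-empty word w, then (u, v) is sealed by a (unique shortest) self-overlap free word. -/
def SelfOverlapFree {A : Type*} (w : List A) : Prop :=
  ∀ p : List A, p ≠ [] → p.length < w.length → p <+: w → ¬ p <:+ w

/-- `(u, v)` is sealed by `w` if `w` is both a prefix and a suffix of `u` and of `v`. -/
def Sealed {A : Type*} (w u v : List A) : Prop :=
  w <+: u ∧ w <:+ u ∧ w <+: v ∧ w <:+ v

/-- If a pair of words is sealed by some non-empty word, then it is sealed by a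
unique shortest word, which moreover is self-overlap free. -/
theorem sealed_by_selfOverlapFree {A : Type*} (u v w : List A) (hw : w ≠ [])
    (h : Sealed w u v) :
    ∃ α : List A, α ≠ [] ∧ SelfOverlapFree α ∧ Sealed α u v ∧
      (∀ β : List A, β ≠ [] → Sealed β u v → α.length ≤ β.length) ∧
      (∀ α' : List A, α' ≠ [] → Sealed α' u v →
        (∀ β : List A, β ≠ [] → Sealed β u v → α'.length ≤ β.length) → α' = α) := by
  classical
  have hP : ∃ n, ∃ β : List A, β.length = n ∧ β ≠ [] ∧ Sealed β u v :=
    ⟨w.length, w, rfl, hw, h⟩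
  obtain ⟨α, hαlen, hαne, hαs⟩ := Nat.find_spec hP
  have hmin : ∀ β : List A, β ≠ [] → Sealed β u v → α.length ≤ β.length := by
    intro β hβne hβs
    rw [hαlen]
    exact Nat.find_le ⟨β, rfl, hβne, hβs⟩
  refine ⟨α, hαne, ?_, hαs, hmin, ?_⟩
  · intro p hpne hplt hpre hsuf
    have hps : Sealed p u v :=
      ⟨hpre.trans hαs.1, hsuf.trans hαs.2.1, hpre.trans hαs.2.2.1, hsuf.trans hαs.2.2.2⟩
    exact absurd (hmin p hpne hps) (not_le.mpr hplt)
  · intro α' hα'ne hα's hα'min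
    have hlen : α'.length = α.length :=
      le_antisymm (hα'min α hαne hαs) (hmin α' hα'ne hα's)
    have := List.prefix_of_prefix_length_le hα's.1 hαs.1 (le_of_eq hlen)
    exact this.eq_of_length hlen
end

section
/- Let α ∈ A^+ be self-overlap free, where |A| > 1. Then the set Σ∗ = α(A* − A*αA*), consisting of all words with prefix α containing exactly one occurrence of α, is a suffix code: no element of Σ∗ is a proper suffix of another element of Σ∗. -/
/-- `w` contains `α` as a factor, i.e. `w ∈ A* α A*`. -/
def IsFactor {A : Type*} (α w : List A) : Prop :=
  ∃ x y : List A, w = x ++ α ++ y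

/-- `Σ∗ = α(A* − A*αA*)`: words beginning with `α` and containing exactly one
occurrence of `α`. -/
def SigmaStar {A : Type*} (α : List A) : Set (List A) :=
  { w | ∃ t : List A, w = α ++ t ∧ ¬ IsFactor α t }

/-- For self-overlap free `α` over an alphabet with more than one letter, `Σ∗`
is a suffix code: no element is a proper suffix of another. -/
theorem sigmaStar_suffix_code {A : Type*} (hA : ∃ a b : A, a ≠ b)
    (α : List A) (hne : α ≠ []) (hsof : SelfOverlapFree α)
    (u v : List A) (hu : u ∈ SigmaStar α) (hv : v ∈ SigmaStar α)
    (hsuf : u <:+ v) : u = v := by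
  obtain ⟨s, rfl, hs⟩ := hu
  obtain ⟨t, rfl, ht⟩ := hv
  obtain ⟨w, hw⟩ := hsuf
  rcases eq_or_ne w [] with rfl | hwne
  · simpa using hw
  exfalso
  have hwpre : w <+: α ++ t := ⟨α ++ s, by simpa using hw⟩
  have hαpre : α <+: α ++ t := ⟨t, rfl⟩
  rcases le_or_gt α.length w.length with hle | hlt
  · obtain ⟨w', rfl⟩ := List.prefix_of_prefix_length_le hαpre hwpre hle
    apply ht
    refine ⟨w', s, ?_⟩
    have h2 := hw
    simp only [List.append_assoc] at h2
    rw [(List.append_cancel_left h2).symm]; simp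
  · obtain ⟨r, hr⟩ := List.prefix_of_prefix_length_le hwpre hαpre hlt.le
    have hrlen : α.length = w.length + r.length := by
      rw [← hr]; simp
    have hwpos : 0 < w.length := List.length_pos_iff.mpr hwne
    have hrne : r ≠ [] := by
      intro h; subst h; simp at hrlen; omega
    have hcancel : α ++ s = r ++ t := by
      have h2 : w ++ (α ++ s) = w ++ (r ++ t) := by
        rw [hw, ← hr]; simp
      exact List.append_cancel_left h2
    have hrpre : r <+: α := by
      refine List.prefix_of_prefix_length_le ⟨t, hcancel.symm⟩ ⟨s, rfl⟩ ?_
      omega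
    exact hsof r hrne (by omega) hrpre ⟨w, hr⟩
end

section
/- Let α ∈ A^+ be self-overlap free and let Σ∗ = α(A* − A*αA*). Then every word w ∈ αA* ∩ A*α admits a unique factorization w = w_1 w_2 ⋯ w_k α with each w_i ∈ Σ∗. -/
section

variable {A : Type*} {α : List A}

namespace SelfOverlapFree

theorem length_le_of_prefix_append (hsof : SelfOverlapFree α) {u z : List A} (hu : u ≠ [])
    (h : α <+: u ++ z) (hz : α <+: z) : α.length ≤ u.length := by
  by_contra! hlt
  obtain ⟨p, rfl⟩ : u <+: α := List.prefix_of_prefix_length_le (u.prefix_append z) h hlt.le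
  have hp : p ≠ [] := by rintro rfl; simp at hlt
  have hpz : p <+: z := (List.prefix_append_right_inj u).mp h
  have hplen : p.length < (u ++ p).length := by simpa using List.length_pos_iff.mpr hu
  have hpα : p <+: u ++ p := List.prefix_of_prefix_length_le hpz hz hplen.le
  exact hsof p hp hplen hpα (List.suffix_append u p)

theorem prefix_of_prefix_append (hsof : SelfOverlapFree α) {u z : List A} (hu : u ≠ [])
    (h : α <+: u ++ z) (hz : α <+: z) : α <+: u :=
  List.prefix_of_prefix_length_le h (u.prefix_append z) (hsof.length_le_of_prefix_append hu h hz)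

theorem eq_or_exists_eq_append_append (hsof : SelfOverlapFree α) {w : List A} (h1 : α <+: w)
    (h2 : α <:+ w) : w = α ∨ ∃ t, w = α ++ t ++ α := by
  obtain ⟨s, rfl⟩ := h1
  obtain ⟨u, hu⟩ := h2
  rcases eq_or_ne s [] with rfl | hs
  · simp
  have hu' : u ≠ [] := by rintro rfl; exact hs (List.append_right_eq_self.mp hu.symm)
  have hlen : α.length ≤ u.length :=
    hsof.length_le_of_prefix_append hu' (hu ▸ List.prefix_append α s) (List.prefix_refl α)
  have hlen' : α.length ≤ s.length := by
    have := congrArg List.length hu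
    simp only [List.length_append] at this
    omega
  obtain ⟨t, rfl⟩ : α <:+ s :=
    List.suffix_of_suffix_length_le ⟨u, hu⟩ (List.suffix_append α s) hlen'
  exact Or.inr ⟨t, by simp⟩

end SelfOverlapFree

theorem SigmaStar.ne_nil (hne : α ≠ []) {x : List A} (hx : x ∈ SigmaStar α) : x ≠ [] := by
  obtain ⟨t, rfl, -⟩ := hx
  simp [hne]

theorem SigmaStar.eq_of_append_eq (hsof : SelfOverlapFree α) {x y a b : List A}
    (hx : x ∈ SigmaStar α) (hy : y ∈ SigmaStar α) (h : x ++ a = y ++ b) (ha : α <+: a)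
    (hb : α <+: b) : x = y := by
  wlog hxy : x.length ≤ y.length generalizing x y a b
  · exact (this hy hx h.symm hb ha (by omega)).symm
  obtain ⟨u, rfl⟩ : x <+: y := List.prefix_of_prefix_length_le ⟨a, h⟩ (y.prefix_append b) hxy
  have hab : a = u ++ b := List.append_cancel_left (h.trans (List.append_assoc x u b))
  rcases eq_or_ne u [] with rfl | hu
  · simp
  obtain ⟨s, hs, hfree⟩ := hy
  obtain ⟨t, rfl, -⟩ := hx
  obtain ⟨v, rfl⟩ := hsof.prefix_of_prefix_append hu (hab ▸ ha) hb
  exact (hfree ⟨t, v, by simpa using hs.symm⟩).elim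

theorem prefix_flatten_append_of_forall_mem_sigmaStar {l : List (List A)}
    (hl : ∀ x ∈ l, x ∈ SigmaStar α) : α <+: l.flatten ++ α := by
  cases l with
  | nil => simp
  | cons x l =>
    obtain ⟨t, rfl, -⟩ := hl x List.mem_cons_self
    simp [List.append_assoc]

theorem exists_sigmaStar_factorisation_append_append (hne : α ≠ []) (t : List A) :
    ∃ l : List (List A), (∀ x ∈ l, x ∈ SigmaStar α) ∧ α ++ t ++ α = l.flatten ++ α := by
  by_cases ht : IsFactor α t
  · obtain ⟨x, y, rfl⟩ := ht
    obtain ⟨l₁, hl₁, e₁⟩ := exists_sigmaStar_factorisation_append_append hne x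
    obtain ⟨l₂, hl₂, e₂⟩ := exists_sigmaStar_factorisation_append_append hne y
    refine ⟨l₁ ++ l₂, fun z hz => (List.mem_append.mp hz).elim (hl₁ z) (hl₂ z), ?_⟩
    calc α ++ (x ++ α ++ y) ++ α = (α ++ x ++ α) ++ y ++ α := by simp
      _ = l₁.flatten ++ (α ++ y ++ α) := by rw [e₁]; simp
      _ = (l₁ ++ l₂).flatten ++ α := by rw [e₂]; simp
  · exact ⟨[α ++ t], by simpa using ⟨t, rfl, ht⟩, by simp⟩
termination_by t.length
decreasing_by
  all_goals
    subst_vars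
    have := List.length_pos_iff.mpr hne
    simp only [List.length_append]
    omega

theorem SigmaStar.eq_of_flatten_append_eq (hne : α ≠ []) (hsof : SelfOverlapFree α) :
    ∀ {l₁ l₂ : List (List A)}, (∀ x ∈ l₁, x ∈ SigmaStar α) → (∀ x ∈ l₂, x ∈ SigmaStar α) →
      l₁.flatten ++ α = l₂.flatten ++ α → l₁ = l₂
  | [], [], _, _, _ => rfl
  | [], y :: r, _, h₂, h => by
    have : y ++ r.flatten = [] := List.self_eq_append_left.mp (by simpa using h)
    exact (SigmaStar.ne_nil hne (h₂ y (by simp)) (List.append_eq_nil_iff.mp this).1).elim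
  | x :: r, [], h₁, _, h => by
    have : x ++ r.flatten = [] := List.append_left_eq_self.mp (by simpa using h)
    exact (SigmaStar.ne_nil hne (h₁ x (by simp)) (List.append_eq_nil_iff.mp this).1).elim
  | x :: r₁, y :: r₂, h₁, h₂, h => by
    simp only [List.forall_mem_cons, List.flatten_cons, List.append_assoc] at h₁ h₂ h
    have hxy : x = y := SigmaStar.eq_of_append_eq hsof h₁.1 h₂.1 h
      (prefix_flatten_append_of_forall_mem_sigmaStar h₁.2)
      (prefix_flatten_append_of_forall_mem_sigmaStar h₂.2)
    subst hxy
    rw [SigmaStar.eq_of_flatten_append_eq hne hsof h₁.2 h₂.2 (List.append_cancel_left h)]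

end

/-- Every word beginning and ending with a self-overlap free word `α` factors
uniquely as `w = w₁ w₂ ⋯ w_k α` with each `w_i ∈ Σ∗`. -/
theorem unique_sigmaStar_factorisation {A : Type*} (α : List A) (hne : α ≠ [])
    (hsof : SelfOverlapFree α) (w : List A) (h1 : α <+: w) (h2 : α <:+ w) :
    ∃! l : List (List A), (∀ x ∈ l, x ∈ SigmaStar α) ∧ w = l.flatten ++ α := by
  obtain ⟨l, hl⟩ : ∃ l : List (List A), (∀ x ∈ l, x ∈ SigmaStar α) ∧ w = l.flatten ++ α := by
    rcases hsof.eq_or_exists_eq_append_append h1 h2 with rfl | ⟨t, rfl⟩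
    · exact ⟨[], by simp⟩
    · exact exists_sigmaStar_factorisation_append_append hne t
  exact ⟨l, hl, fun l' hl' => SigmaStar.eq_of_flatten_append_eq hne hsof hl'.1 hl.1 (hl'.2 ▸ hl.2)⟩
end

section
/- Let α ∈ A^+ be self-overlap free. Then every word u ∈ A*αA* factors uniquely as u = u' u† u'' where u', u'' ∈ A* − A*αA* (i.e., neither contains α as a factor) and u† ∈ αA* ∩ A*α. -/
/-!
The prefix `u'` ends where the first occurrence of `α` starts, and `u''` starts where the last
one ends. For uniqueness, in any such factorization `u' α` is a prefix of `u`; an occurrence of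
`α` starting earlier would either lie inside `u'` or overlap this one, and self-overlap freeness
excludes the latter. So `u'` is forced, `u''` likewise by reversal, and then `u†` by cancellation.
-/

section

variable {A : Type*} {α : List A}

theorem IsFactor.reverse {w : List A} (h : IsFactor α w) : IsFactor α.reverse w.reverse := by
  obtain ⟨x, y, rfl⟩ := h
  exact ⟨y.reverse, x.reverse, by simp⟩

theorem isFactor_reverse_iff {w : List A} : IsFactor α.reverse w.reverse ↔ IsFactor α w :=
  ⟨fun h => by simpa using h.reverse, IsFactor.reverse⟩

theorem SelfOverlapFree.reverse (h : SelfOverlapFree α) : SelfOverlapFree α.reverse := by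
  intro p hp hlen hpre hsuf
  refine h p.reverse (by simpa using hp) (by simpa using hlen) ?_ ?_
  · simpa using List.reverse_prefix.2 hsuf
  · simpa using List.reverse_suffix.2 hpre

theorem isFactor_of_append_prefix {x w : List A} (h : x ++ α <+: w) : IsFactor α w := by
  obtain ⟨y, hy⟩ := h
  exact ⟨x, y, hy.symm⟩

theorem append_prefix_of_eq_append {u a m b : List A} (hm : α <+: m) (hu : u = a ++ m ++ b) :
    a ++ α <+: u := by
  obtain ⟨r, rfl⟩ := hm
  exact ⟨r ++ b, by simp [hu]⟩

theorem reverse_append_prefix_of_eq_append {u a m b : List A} (hm : α <:+ m)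
    (hu : u = a ++ m ++ b) : b.reverse ++ α.reverse <+: u.reverse :=
  append_prefix_of_eq_append (List.reverse_prefix.2 hm) (a := b.reverse) (b := a.reverse)
    (by simp [hu])

theorem IsFactor.exists_eq_append_not_isFactor_left (hne : α ≠ []) {u : List A}
    (h : IsFactor α u) : ∃ a w, u = a ++ α ++ w ∧ ¬ IsFactor α a := by
  obtain ⟨x, y, hu⟩ := h
  induction hn : x.length using Nat.strong_induction_on generalizing x y with
  | _ n ih =>
    by_cases hx : IsFactor α x
    · obtain ⟨p, q, rfl⟩ := hx
      have hlt : p.length < n := by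
        simp only [← hn, List.length_append]
        have := List.length_pos_iff.2 hne
        omega
      exact ih _ hlt p (q ++ α ++ y) (by simp [hu]) rfl
    · exact ⟨x, y, hu, hx⟩

theorem IsFactor.exists_eq_append_not_isFactor_right (hne : α ≠ []) {u : List A}
    (h : IsFactor α u) : ∃ z b, u = z ++ α ++ b ∧ ¬ IsFactor α b := by
  obtain ⟨b, z, hrev, hb⟩ :=
    h.reverse.exists_eq_append_not_isFactor_left (List.reverse_ne_nil_iff.2 hne)
  refine ⟨z.reverse, b.reverse, ?_, by rwa [← isFactor_reverse_iff, List.reverse_reverse]⟩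
  simpa using congrArg List.reverse hrev

theorem SelfOverlapFree.not_overlap (h : SelfOverlapFree α) {u x y : List A}
    (hx : x ++ α <+: u) (hy : y ++ α <+: u) (hxy : x.length < y.length)
    (hyx : y.length < x.length + α.length) : False := by
  obtain ⟨d, rfl⟩ : x <+: y :=
    List.prefix_of_prefix_length_le ((List.prefix_append _ _).trans hx)
      ((List.prefix_append _ _).trans hy) hxy.le
  simp only [List.length_append] at hxy hyx
  have hα : α <+: d ++ α := by
    obtain ⟨v, rfl⟩ : x <+: u := (List.prefix_append _ _).trans hx
    rw [List.prefix_append_right_inj] at hx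
    rw [List.append_assoc, List.prefix_append_right_inj] at hy
    exact List.prefix_of_prefix_length_le hx hy (by simp)
  obtain ⟨s, hs⟩ : d <+: α :=
    List.prefix_of_prefix_length_le (List.prefix_append d α) hα (by omega)
  have hlen := congrArg List.length hs
  rw [List.length_append] at hlen
  refine h s (by rintro rfl; simp at hlen; omega) (by omega) ?_ ⟨d, hs⟩
  exact (List.prefix_append_right_inj d).1 (by rw [hs]; exact hα)

theorem SelfOverlapFree.length_le_of_not_isFactor (h : SelfOverlapFree α) {u a x : List A}
    (ha : a ++ α <+: u) (hx : x ++ α <+: u) (hfree : ¬ IsFactor α a) :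
    a.length ≤ x.length := by
  by_contra! hlt
  by_cases hinside : x.length + α.length ≤ a.length
  · exact hfree (isFactor_of_append_prefix
      (List.prefix_of_prefix_length_le hx ((List.prefix_append _ _).trans ha) (by simpa)))
  · exact h.not_overlap hx ha hlt (by omega)

theorem SelfOverlapFree.eq_of_not_isFactor (h : SelfOverlapFree α) {u a a' : List A}
    (ha : a ++ α <+: u) (ha' : a' ++ α <+: u) (hfree : ¬ IsFactor α a)
    (hfree' : ¬ IsFactor α a') : a = a' := by
  have hlen := le_antisymm (h.length_le_of_not_isFactor ha ha' hfree)
    (h.length_le_of_not_isFactor ha' ha hfree')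
  exact (List.prefix_of_prefix_length_le ((List.prefix_append _ _).trans ha)
    ((List.prefix_append _ _).trans ha') hlen.le).eq_of_length hlen

end

/-- Canonical form: every word containing the self-overlap free word `α` as a
factor factors uniquely as `u = u' u† u''` with `u', u''` not containing `α`
and `u†` beginning and ending with `α`. -/
theorem canonical_form {A : Type*} (α : List A) (hne : α ≠ [])
    (hsof : SelfOverlapFree α) (u : List A) (hu : IsFactor α u) :
    ∃! t : List A × List A × List A,
      ¬ IsFactor α t.1 ∧ ¬ IsFactor α t.2.2 ∧
      α <+: t.2.1 ∧ α <:+ t.2.1 ∧ u = t.1 ++ t.2.1 ++ t.2.2 := by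
  obtain ⟨a, w, rfl, ha⟩ := hu.exists_eq_append_not_isFactor_left hne
  obtain ⟨z, b, hw, hb⟩ :=
    IsFactor.exists_eq_append_not_isFactor_right hne (u := α ++ w) ⟨[], w, rfl⟩
  have hzα : α <+: z ++ α :=
    List.prefix_of_prefix_length_le (List.prefix_append α w) ⟨b, hw.symm⟩ (by simp)
  have hu : a ++ α ++ w = a ++ (z ++ α) ++ b := by simp [hw]
  refine ⟨(a, z ++ α, b), ⟨ha, hb, hzα, List.suffix_append z α, hu⟩, ?_⟩
  rintro ⟨a', m', b'⟩ ⟨ha', hb', hpre', hsuf', hu'⟩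
  dsimp only at ha' hb' hpre' hsuf' hu'
  have hbb : b' = b :=
    List.reverse_injective <| hsof.reverse.eq_of_not_isFactor
      (reverse_append_prefix_of_eq_append hsuf' hu')
      (reverse_append_prefix_of_eq_append (List.suffix_append z α) hu)
      (by rwa [isFactor_reverse_iff]) (by rwa [isFactor_reverse_iff])
  have haa : a' = a := hsof.eq_of_not_isFactor (append_prefix_of_eq_append hpre' hu')
    (List.prefix_append _ _) ha' ha
  subst haa hbb
  rw [hu', List.append_cancel_right_eq, List.append_cancel_left_eq] at hu
  simp [hu]
end

section
/- Let α ∈ A^+ be self-overlap free, let ◊ be a new symbol, A_◊ = A ∪ {◊}, and let σ_◊ : A_◊* → A* be the monoid homomorphism fixing each a ∈ A and sending ◊ to α. Then for every word u ∈ A*, there is exactly one word u_◊ ∈ A_◊* such that u_◊ does not contain α as a factor and σ_◊(u_◊) = u. -/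
/-- The homomorphism `σ_◊ : A_◊* → A*` fixing letters of `A` and sending the
new symbol `◊` (modelled as `none`) to `α`. -/
def sigmaDiamond {A : Type*} (α : List A) (w : List (Option A)) : List A :=
  w.flatMap fun o => o.elim α fun a => [a]

/-!
A word `w` over `A_◊` without the factor `α` is determined by `σ_◊ w` letter by letter: it starts
with `◊` exactly when `σ_◊ w` starts with `α`. One direction is clear. Conversely, if `w` starts
with a maximal block `p` of letters of `A`, then `σ_◊ w = p ++ α ++ …` or `σ_◊ w = p`; were `α` a
prefix of it, either `α` would be a prefix of `p`, hence a factor of `w`, or `α = p ++ q` with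
`q` both a proper prefix and a proper suffix of `α`.
-/

open List

theorem isFactor_iff_infix {B : Type*} {β w : List B} : IsFactor β w ↔ β <:+: w :=
  ⟨fun ⟨x, y, h⟩ => ⟨x, y, h.symm⟩, fun ⟨x, y, h⟩ => ⟨x, y, h.symm⟩⟩

theorem SelfOverlapFree.not_prefix_append {A : Type*} {α p s : List A} (hsof : SelfOverlapFree α)
    (hp : p ≠ []) (hlt : p.length < α.length) : ¬ α <+: p ++ (α ++ s) := by
  intro hα
  obtain ⟨q, rfl⟩ : p <+: α := prefix_of_prefix_length_le (prefix_append _ _) hα hlt.le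
  have hq : q ≠ [] := by rintro rfl; simp at hlt
  have hqlt : q.length < (p ++ q).length := by simpa [length_pos_iff] using hp
  have hq_pre : q <+: p ++ q :=
    prefix_of_prefix_length_le ((prefix_append_right_inj p).mp hα) (prefix_append _ _) hqlt.le
  exact hsof q hq hqlt hq_pre (suffix_append p q)

section SigmaDiamond

variable {A : Type*} {α : List A}

@[simp]
theorem sigmaDiamond_cons_none (w : List (Option A)) :
    sigmaDiamond α (none :: w) = α ++ sigmaDiamond α w := rfl

@[simp]
theorem sigmaDiamond_cons_some (a : A) (w : List (Option A)) :
    sigmaDiamond α (some a :: w) = a :: sigmaDiamond α w := rfl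

@[simp]
theorem sigmaDiamond_append (v w : List (Option A)) :
    sigmaDiamond α (v ++ w) = sigmaDiamond α v ++ sigmaDiamond α w :=
  flatMap_append

@[simp]
theorem sigmaDiamond_map_some (l : List A) : sigmaDiamond α (l.map some) = l := by
  induction l with
  | nil => rfl
  | cons a l ih => simp [ih]

theorem sigmaDiamond_eq_nil_iff (hne : α ≠ []) {w : List (Option A)} :
    sigmaDiamond α w = [] ↔ w = [] := by
  refine ⟨fun h => ?_, fun h => h ▸ rfl⟩
  rcases w with _ | ⟨_ | a, w⟩ <;> simp_all

theorem List.IsPrefix.prefix_sigmaDiamond {l : List A} {w : List (Option A)}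
    (h : l.map some <+: w) : l <+: sigmaDiamond α w := by
  obtain ⟨r, rfl⟩ := h
  simp

theorem exists_eq_map_some_append (w : List (Option A)) :
    ∃ (p : List A) (r : List (Option A)), w = p.map some ++ r ∧ (r = [] ∨ ∃ t, r = none :: t) := by
  induction w with
  | nil => exact ⟨[], [], rfl, .inl rfl⟩
  | cons o w ih =>
    cases o with
    | none => exact ⟨[], none :: w, rfl, .inr ⟨w, rfl⟩⟩
    | some a =>
      obtain ⟨p, r, rfl, hr⟩ := ih
      exact ⟨a :: p, r, rfl, hr⟩

theorem not_map_some_prefix_cons_none (hne : α ≠ []) (w : List (Option A)) :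
    ¬ α.map some <+: none :: w := by
  obtain ⟨a, s, rfl⟩ := exists_cons_of_ne_nil hne
  simp

theorem exists_eq_none_cons_of_prefix_sigmaDiamond (hsof : SelfOverlapFree α)
    {w : List (Option A)} (hfree : ¬ α.map some <:+: w) (hpre : α <+: sigmaDiamond α w) :
    ∃ t, w = none :: t := by
  obtain ⟨p, r, rfl, hr⟩ := exists_eq_map_some_append w
  have not_prefix_p : ¬ α <+: p := fun h =>
    hfree ((h.map some).isInfix.trans (prefix_append _ _).isInfix)
  rcases hr with rfl | ⟨t, rfl⟩
  · exact absurd (by simpa using hpre) not_prefix_p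
  rcases eq_or_ne p [] with rfl | hp
  · exact ⟨t, rfl⟩
  simp only [sigmaDiamond_append, sigmaDiamond_map_some, sigmaDiamond_cons_none] at hpre
  by_cases hlen : α.length ≤ p.length
  · exact absurd (prefix_of_prefix_length_le hpre (prefix_append _ _) hlen) not_prefix_p
  · exact absurd hpre (hsof.not_prefix_append hp (by omega))

theorem exists_sigmaDiamond_eq (hne : α ≠ []) (u : List A) :
    ∃ w, ¬ α.map some <:+: w ∧ sigmaDiamond α w = u := by
  by_cases hα : α <+: u
  · obtain ⟨v, rfl⟩ := hα
    obtain ⟨w, hfree, rfl⟩ := exists_sigmaDiamond_eq hne v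
    refine ⟨none :: w, ?_, rfl⟩
    rw [infix_cons_iff]
    rintro (h | h)
    exacts [not_map_some_prefix_cons_none hne w h, hfree h]
  · match u with
    | [] => exact ⟨[], by simpa using hne, rfl⟩
    | a :: v =>
      obtain ⟨w, hfree, rfl⟩ := exists_sigmaDiamond_eq hne v
      refine ⟨some a :: w, ?_, rfl⟩
      rw [infix_cons_iff]
      rintro (h | h)
      exacts [hα h.prefix_sigmaDiamond, hfree h]
termination_by u.length
decreasing_by
  · subst_vars
    simpa [length_pos_iff] using hne
  · simp

theorem eq_of_sigmaDiamond_eq (hne : α ≠ []) (hsof : SelfOverlapFree α)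
    {w₁ w₂ : List (Option A)} (h₁ : ¬ α.map some <:+: w₁) (h₂ : ¬ α.map some <:+: w₂)
    (hσ : sigmaDiamond α w₁ = sigmaDiamond α w₂) : w₁ = w₂ := by
  induction w₁ generalizing w₂ with
  | nil => exact ((sigmaDiamond_eq_nil_iff hne).mp hσ.symm).symm
  | cons o₁ t₁ ih =>
    rcases w₂ with _ | ⟨o₂, t₂⟩
    · exact (sigmaDiamond_eq_nil_iff hne).mp hσ
    have ih' := fun hσ' => ih (fun h => h₁ (infix_cons h)) (fun h => h₂ (infix_cons h)) hσ'
    rcases o₁ with _ | a <;> rcases o₂ with _ | b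
    · simpa using ih' (by simpa using hσ)
    · obtain ⟨t, ht⟩ := exists_eq_none_cons_of_prefix_sigmaDiamond hsof h₂
        (hσ ▸ prefix_append α (sigmaDiamond α t₁))
      simp at ht
    · obtain ⟨t, ht⟩ := exists_eq_none_cons_of_prefix_sigmaDiamond hsof h₁
        (hσ ▸ prefix_append α (sigmaDiamond α t₂))
      simp at ht
    · obtain ⟨rfl, ht⟩ := cons_eq_cons.mp hσ
      rw [ih' ht]

end SigmaDiamond

/-- For self-overlap free `α`, every word over `A` has exactly one `σ_◊`-preimage
not containing `α` (viewed over `A_◊`) as a factor. -/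
theorem unique_diamond_lift {A : Type*} (α : List A) (hne : α ≠ [])
    (hsof : SelfOverlapFree α) (u : List A) :
    ∃! w : List (Option A),
      ¬ IsFactor (α.map some) w ∧ sigmaDiamond α w = u := by
  simp only [isFactor_iff_infix]
  obtain ⟨w, hw⟩ := exists_sigmaDiamond_eq hne u
  exact ⟨w, hw, fun w' hw' => eq_of_sigmaDiamond_eq hne hsof hw'.1 hw.1 (hw'.2.trans hw.2.symm)⟩
end

section
/- Let L_1 = { a^n # a^n : n ≥ 0 } and L_2 = { b^n # b^n : n ≥ 0 } over the alphabet {a, b, #}. Then the alternating product L_1 ⋆ L_2 equals { w # w^rev : w ∈ {a,b}* }, the word problem of the free monoid on {a, b}. -/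
/-- The word `u # v` over `A ∪ {#}`, with `#` modelled by `none`. -/
def pairWord {A : Type*} (u v : List A) : List (Option A) :=
  u.map some ++ none :: v.map some

/-- The alternating product `L₁ ⋆ L₂`: all words
`u₁ ⋯ u_k # v_k ⋯ v₁` with `u_i # v_i ∈ L_{X(i)}` for a standard (alternating)
parametrisation `X`. -/
def AltProd {A : Type*} (L₁ L₂ : Set (List (Option A))) : Set (List (Option A)) :=
  { w | ∃ (k : ℕ) (u v : ℕ → List A) (X : ℕ → Bool),
      (∀ n, X (n + 1) = !X n) ∧
      (∀ i < k, pairWord (u i) (v i) ∈ (if X i then L₁ else L₂)) ∧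
      w = pairWord (((List.range k).map u).flatten)
            (((List.range k).reverse.map v).flatten) }

lemma pairWord_inj {A : Type*} {u v u' v' : List A}
    (h : pairWord u v = pairWord u' v') : u = u' ∧ v = v' := by
  induction u generalizing u' with
  | nil =>
    cases u' with
    | nil =>
      refine ⟨rfl, List.map_injective_iff.2 (fun _ _ h => Option.some.inj h) ?_⟩
      simpa [pairWord] using h
    | cons a t => simp [pairWord] at h
  | cons a t ih =>
    cases u' with
    | nil => simp [pairWord] at h
    | cons b s =>
      simp only [pairWord, List.map_cons, List.cons_append, List.cons.injEq,
        Option.some.injEq] at h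
      obtain ⟨rfl, h2⟩ := h
      obtain ⟨rfl, rfl⟩ := ih h2
      exact ⟨rfl, (ih h2).2⟩

lemma exists_decomp (x : List Bool) : ∀ b : Bool,
    ∃ (k : ℕ) (u : ℕ → List Bool) (X : ℕ → Bool), X 0 = b ∧
      (∀ n, X (n + 1) = !X n) ∧
      (∀ i < k, ∃ n, u i = List.replicate n (X i)) ∧
      ((List.range k).map u).flatten = x := by
  induction x with
  | nil =>
    intro b
    exact ⟨0, fun _ => [], fun i => if i % 2 = 0 then b else !b, by simp,
      fun n => by rcases Nat.even_or_odd n with h | h <;>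
        simp [Nat.succ_mod_two_eq_zero_iff, Nat.succ_mod_two_eq_one_iff,
          Nat.even_iff, Nat.odd_iff] at * <;> simp [h],
      by omega, by simp⟩
  | cons c x ih =>
    have key : ∃ (k : ℕ) (u : ℕ → List Bool) (X : ℕ → Bool), X 0 = c ∧
        (∀ n, X (n + 1) = !X n) ∧
        (∀ i < k, ∃ n, u i = List.replicate n (X i)) ∧
        ((List.range k).map u).flatten = c :: x := by
      obtain ⟨k, u, X, hX0, hXalt, hrep, hflat⟩ := ih (!c)
      refine ⟨k + 1, fun i => match i with | 0 => [c] | n + 1 => u n,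
        fun i => match i with | 0 => c | n + 1 => X n, rfl, ?_, ?_, ?_⟩
      · intro n; cases n with
        | zero => simp [hX0]
        | succ m => exact hXalt m
      · intro i hi; cases i with
        | zero => exact ⟨1, by simp⟩
        | succ m => exact hrep m (by omega)
      · rw [List.range_succ_eq_map]
        simp only [List.map_cons, List.map_map, List.flatten_cons]
        have : (List.range k).map ((fun i => match i with | 0 => [c] | n + 1 => u n) ∘ Nat.succ)
            = (List.range k).map u := List.map_congr_left (fun a _ => rfl)
        rw [this, hflat]
        rfl
    intro b
    by_cases hb : b = c
    · subst hb; exact key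
    · obtain ⟨k, u, X, hX0, hXalt, hrep, hflat⟩ := key
      refine ⟨k + 1, fun i => match i with | 0 => [] | n + 1 => u n,
        fun i => match i with | 0 => b | n + 1 => X n, rfl, ?_, ?_, ?_⟩
      · intro n; cases n with
        | zero => simp [hX0]; cases b <;> cases c <;> simp_all
        | succ m => exact hXalt m
      · intro i hi; cases i with
        | zero => exact ⟨0, by simp⟩
        | succ m => exact hrep m (by omega)
      · rw [List.range_succ_eq_map]
        simp only [List.map_cons, List.map_map, List.flatten_cons]
        have : (List.range k).map ((fun i => match i with | 0 => ([]:List Bool) | n + 1 => u n) ∘ Nat.succ)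
            = (List.range k).map u := List.map_congr_left (fun a _ => rfl)
        rw [this, hflat]
        rfl

lemma flat_rev (k : ℕ) (u : ℕ → List Bool) (h : ∀ i < k, (u i).reverse = u i) :
    ((List.range k).reverse.map u).flatten = (((List.range k).map u).flatten).reverse := by
  rw [List.reverse_flatten, List.map_map, ← List.map_reverse]
  congr 1
  refine List.map_congr_left (fun a ha => ?_)
  simp only [List.mem_reverse, List.mem_range] at ha
  exact (h a ha).symm ▸ rfl

/-- With `a := true` and `b := false`: the alternating product of
`{aⁿ # aⁿ}` and `{bⁿ # bⁿ}` is the word problem `{w # w^rev}` of the free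
monoid on `{a, b}`. -/
theorem altProd_free_monoid_word_problem :
    AltProd { w | ∃ n : ℕ, w = pairWord (List.replicate n true) (List.replicate n true) }
        { w | ∃ n : ℕ, w = pairWord (List.replicate n false) (List.replicate n false) }
      = { w | ∃ x : List Bool, w = pairWord x x.reverse } := by
  ext w
  constructor
  · rintro ⟨k, u, v, X, hXalt, hmem, rfl⟩
    have huv : ∀ i < k, u i = v i ∧ (u i).reverse = u i := by
      intro i hi
      have := hmem i hi
      cases hX : X i <;> simp only [hX, if_true, if_false, Bool.false_eq_true] at this <;>
        · obtain ⟨n, hn⟩ := this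
          obtain ⟨h1, h2⟩ := pairWord_inj hn
          exact ⟨h1.trans h2.symm, by rw [h1]; simp⟩
    refine ⟨((List.range k).map u).flatten, ?_⟩
    have hv : (List.range k).reverse.map v = (List.range k).reverse.map u :=
      List.map_congr_left (fun a ha => by
        simp only [List.mem_reverse, List.mem_range] at ha
        exact ((huv a ha).1).symm)
    rw [hv, flat_rev k u (fun i hi => (huv i hi).2)]
  · rintro ⟨x, rfl⟩
    obtain ⟨k, u, X, hX0, hXalt, hrep, hflat⟩ := exists_decomp x true
    refine ⟨k, u, u, X, hXalt, ?_, ?_⟩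
    · intro i hi
      obtain ⟨n, hn⟩ := hrep i hi
      cases hX : X i <;> simp only [hX, if_true, if_false, Bool.false_eq_true] <;>
        exact ⟨n, by rw [hn, hX]⟩
    · have hrev : ∀ i < k, (u i).reverse = u i := by
        intro i hi; obtain ⟨n, hn⟩ := hrep i hi; rw [hn]; simp
      rw [hflat, flat_rev k u hrev, hflat]
end
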